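/- arXiv:1901.11464 — 2 statements merged into one kernel-verified Lean document; each statement's English description precedes it below -/
import Mathlib

section
/- If a real triplet (s1, s2, s3) with s1 = 0 satisfies the P3P system, then s2 = ±c, s3 = ±b, and cos²α = cos²A, where A is the angle of the triangle with sides a, b, c at the vertex opposite side a (i.e., cos A = (b² + c² − a²)/(2bc)). -/
theorem sq_eq_div_sq_of_two_mul_mul_eq {K : Type*} [Field K] [NeZero (2 : K)] {k x y u v d : K}
    (hu : u ≠ 0) (hv : v ≠ 0) (hx : x ^ 2 = u ^ 2) (hy : y ^ 2 = v ^ 2)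
    (hk : 2 * k * x * y = d) : k ^ 2 = (d / (2 * u * v)) ^ 2 := by
  rw [div_pow, eq_div_iff (pow_ne_zero 2 (mul_ne_zero (mul_ne_zero two_ne_zero hu) hv)), ← hk]
  linear_combination (-4 * k ^ 2 * y ^ 2) * hx - 4 * k ^ 2 * u ^ 2 * hy

theorem stmt_2_general (a b c α β γ s1 s2 s3 : ℝ)
    (hb : 0 < b) (hc : 0 < c)
    (hs1 : s1 = 0)
    (h1 : s1 ^ 2 + s2 ^ 2 - 2 * Real.cos γ * s1 * s2 = c ^ 2)
    (h2 : s1 ^ 2 + s3 ^ 2 - 2 * Real.cos β * s1 * s3 = b ^ 2)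
    (h3 : s2 ^ 2 + s3 ^ 2 - 2 * Real.cos α * s2 * s3 = a ^ 2) :
    (s2 = c ∨ s2 = -c) ∧ (s3 = b ∨ s3 = -b) ∧
    Real.cos α ^ 2 = ((b ^ 2 + c ^ 2 - a ^ 2) / (2 * b * c)) ^ 2 := by
  subst hs1
  have hs2 : s2 ^ 2 = c ^ 2 := by simpa using h1
  have hs3 : s3 ^ 2 = b ^ 2 := by simpa using h2
  have hcos : 2 * Real.cos α * s3 * s2 = b ^ 2 + c ^ 2 - a ^ 2 := by
    linear_combination hs2 + hs3 - h3
  exact ⟨sq_eq_sq_iff_eq_or_eq_neg.1 hs2, sq_eq_sq_iff_eq_or_eq_neg.1 hs3,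
    sq_eq_div_sq_of_two_mul_mul_eq hb.ne' hc.ne' hs3 hs2 hcos⟩

/-- If a real triplet with `s1 = 0` satisfies the P3P system for a nondegenerate triangle
with sides `a, b, c`, then `s2 = ±c`, `s3 = ±b`, and `cos²α = cos²∠A` where
`cos ∠A = (b² + c² - a²)/(2bc)`. -/
theorem stmt_2 (a b c α β γ s1 s2 s3 : ℝ)
    (ha : 0 < a) (hb : 0 < b) (hc : 0 < c)
    (hab : a < b + c) (hbc : b < a + c) (hca : c < a + b)
    (hs1 : s1 = 0)
    (h1 : s1 ^ 2 + s2 ^ 2 - 2 * Real.cos γ * s1 * s2 = c ^ 2)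
    (h2 : s1 ^ 2 + s3 ^ 2 - 2 * Real.cos β * s1 * s3 = b ^ 2)
    (h3 : s2 ^ 2 + s3 ^ 2 - 2 * Real.cos α * s2 * s3 = a ^ 2) :
    (s2 = c ∨ s2 = -c) ∧ (s3 = b ∨ s3 = -b) ∧
    Real.cos α ^ 2 = ((b ^ 2 + c ^ 2 - a ^ 2) / (2 * b * c)) ^ 2 :=
  stmt_2_general a b c α β γ s1 s2 s3 hb hc hs1 h1 h2 h3
end

section
/- Two right circular cones in ℝ³ with common apex, axes making angle A ∈ (0, π), and half-angles β0, γ0 ∈ [0, π] have a common ray (intersect in at least one ray from the apex) if and only if cos²β0 + cos²γ0 − sin²A − 2·cosβ0·cosγ0·cosA ≤ 0. -/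
/-!
A unit vector `y` spans a common ray iff `⟪y, u1⟫ = cos β0` and `⟪y, u2⟫ = cos γ0`. Necessity of
the inequality is the nonnegativity of the Gram determinant of `u1, u2, y`, which is minus the
displayed expression. Conversely, as `sin A ≠ 0` these two conditions determine the projection of
`y` onto the plane of `u1, u2`; its squared length is
`(cos²β0 + cos²γ0 - 2 cos β0 cos γ0 cos A) / sin²A`, the inequality says this is at most `1`, and
the third dimension supplies the orthogonal component that makes `y` a unit vector.
-/

open InnerProductGeometry Real RealInnerProductSpace Module

section Cones

variable {E : Type*} [NormedAddCommGroup E] [InnerProductSpace ℝ E]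

theorem sq_inner_add_sq_inner_le_of_norm_eq_one {u v y : E} (hu : ‖u‖ = 1) (hv : ‖v‖ = 1)
    (hy : ‖y‖ = 1) :
    ⟪y, u⟫ ^ 2 + ⟪y, v⟫ ^ 2 - 2 * ⟪y, u⟫ * ⟪y, v⟫ * ⟪u, v⟫ ≤ 1 - ⟪u, v⟫ ^ 2 := by
  have h := (Matrix.posSemidef_gram ℝ ![u, v, y]).det_nonneg
  simp only [Matrix.det_fin_three, Matrix.gram_apply, Matrix.cons_val, real_inner_self_eq_norm_sq,
    hu, hv, hy] at h
  rw [real_inner_comm u v, real_inner_comm y u, real_inner_comm y v] at h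
  linear_combination h

theorem exists_norm_eq_one_inner_eq_zero_of_two_lt_finrank [FiniteDimensional ℝ E]
    (hE : 2 < finrank ℝ E) (u v : E) : ∃ w : E, ‖w‖ = 1 ∧ ⟪w, u⟫ = 0 ∧ ⟪w, v⟫ = 0 := by
  set K := Submodule.span ℝ (Set.range ![u, v])
  have hK : finrank ℝ K ≤ 2 := (finrank_range_le_card _).trans (by simp)
  have hKperp : Kᗮ ≠ ⊥ := by
    intro h
    have := K.finrank_add_finrank_orthogonal
    rw [h, finrank_bot] at this
    omega
  obtain ⟨w, hwK, hw0⟩ := Submodule.exists_mem_ne_zero_of_ne_bot hKperp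
  have hwu : ⟪w, u⟫ = 0 :=
    (Submodule.mem_orthogonal' K w).1 hwK u (Submodule.subset_span ⟨0, rfl⟩)
  have hwv : ⟪w, v⟫ = 0 :=
    (Submodule.mem_orthogonal' K w).1 hwK v (Submodule.subset_span ⟨1, rfl⟩)
  exact ⟨‖w‖⁻¹ • w, norm_smul_inv_norm hw0, by simp [real_inner_smul_left, hwu],
    by simp [real_inner_smul_left, hwv]⟩

theorem exists_norm_eq_one_inner_eq_of_le [FiniteDimensional ℝ E] (hE : 2 < finrank ℝ E)
    {u v : E} (hu : ‖u‖ = 1) (hv : ‖v‖ = 1) (huv : ⟪u, v⟫ ^ 2 < 1) {b c : ℝ}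
    (hbc : b ^ 2 + c ^ 2 - 2 * b * c * ⟪u, v⟫ ≤ 1 - ⟪u, v⟫ ^ 2) :
    ∃ y : E, ‖y‖ = 1 ∧ ⟪y, u⟫ = b ∧ ⟪y, v⟫ = c := by
  obtain ⟨w, hw, hwu, hwv⟩ := exists_norm_eq_one_inner_eq_zero_of_two_lt_finrank hE u v
  set a := ⟪u, v⟫ with ha
  have hD : 0 < 1 - a ^ 2 := sub_pos.2 huv
  -- `p • u + q • v` is the orthogonal projection of the sought `y` onto the plane of `u, v`
  set p := (b - a * c) / (1 - a ^ 2)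
  set q := (c - a * b) / (1 - a ^ 2)
  set r := √(1 - (b ^ 2 + c ^ 2 - 2 * b * c * a) / (1 - a ^ 2))
  have hr : r ^ 2 = 1 - (b ^ 2 + c ^ 2 - 2 * b * c * a) / (1 - a ^ 2) :=
    sq_sqrt (by rw [sub_nonneg, div_le_one hD]; exact hbc)
  have huu : ⟪u, u⟫ = 1 := by rw [real_inner_self_eq_norm_sq, hu, one_pow]
  have hvv : ⟪v, v⟫ = 1 := by rw [real_inner_self_eq_norm_sq, hv, one_pow]
  have hww : ⟪w, w⟫ = 1 := by rw [real_inner_self_eq_norm_sq, hw, one_pow]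
  have hvu : ⟪v, u⟫ = a := real_inner_comm u v
  have hyu : ⟪p • u + q • v + r • w, u⟫ = b := by
    simp only [inner_add_left, real_inner_smul_left, huu, hvu, hwu, p, q]
    field_simp [hD.ne']
    ring
  have hyv : ⟪p • u + q • v + r • w, v⟫ = c := by
    simp only [inner_add_left, real_inner_smul_left, hvv, hwv, ← ha, p, q]
    field_simp [hD.ne']
    ring
  have hyw : ⟪p • u + q • v + r • w, w⟫ = r := by
    simp only [inner_add_left, real_inner_smul_left, real_inner_comm w u, real_inner_comm w v,
      hwu, hwv, hww, mul_zero, mul_one, zero_add]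
  refine ⟨p • u + q • v + r • w, ?_, hyu, hyv⟩
  have hyy : ‖p • u + q • v + r • w‖ ^ 2 = 1 := by
    rw [← real_inner_self_eq_norm_sq]
    conv_lhs => rw [inner_add_right, inner_add_right, real_inner_smul_right, real_inner_smul_right,
      real_inner_smul_right, hyu, hyv, hyw]
    rw [← sq, hr]
    simp only [p, q]
    field_simp [hD.ne']
    ring
  exact (pow_eq_one_iff_of_nonneg (norm_nonneg _) two_ne_zero).1 hyy

theorem angle_eq_iff_inner_eq_cos {x u : E} (hx : ‖x‖ = 1) (hu : ‖u‖ = 1) {β : ℝ}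
    (hβ : β ∈ Set.Icc 0 π) : angle x u = β ↔ ⟪x, u⟫ = cos β := by
  rw [← injOn_cos.eq_iff ⟨angle_nonneg x u, angle_le_pi x u⟩ hβ, cos_angle, hx, hu, mul_one,
    div_one]

theorem exists_norm_eq_one_inner_eq_iff [FiniteDimensional ℝ E] (hE : 2 < finrank ℝ E)
    {u v : E} (hu : ‖u‖ = 1) (hv : ‖v‖ = 1) (huv : ⟪u, v⟫ ^ 2 < 1) {b c : ℝ} :
    (∃ y : E, ‖y‖ = 1 ∧ ⟪y, u⟫ = b ∧ ⟪y, v⟫ = c) ↔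
      b ^ 2 + c ^ 2 - 2 * b * c * ⟪u, v⟫ ≤ 1 - ⟪u, v⟫ ^ 2 := by
  refine ⟨?_, exists_norm_eq_one_inner_eq_of_le hE hu hv huv⟩
  rintro ⟨y, hy, rfl, rfl⟩
  exact sq_inner_add_sq_inner_le_of_norm_eq_one hu hv hy

theorem exists_ne_zero_angle_eq_iff_exists_inner_eq_cos {u v : E} (hu : ‖u‖ = 1) (hv : ‖v‖ = 1)
    {β γ : ℝ} (hβ : β ∈ Set.Icc 0 π) (hγ : γ ∈ Set.Icc 0 π) :
    (∃ x : E, x ≠ 0 ∧ angle x u = β ∧ angle x v = γ) ↔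
      ∃ y : E, ‖y‖ = 1 ∧ ⟪y, u⟫ = cos β ∧ ⟪y, v⟫ = cos γ := by
  constructor
  · rintro ⟨x, hx, hxu, hxv⟩
    have hx' : 0 < ‖x‖⁻¹ := inv_pos.2 (norm_pos_iff.2 hx)
    have hy : ‖‖x‖⁻¹ • x‖ = 1 := norm_smul_inv_norm hx
    refine ⟨‖x‖⁻¹ • x, hy, ?_, ?_⟩
    · rwa [← angle_eq_iff_inner_eq_cos hy hu hβ, angle_smul_left_of_pos _ _ hx']
    · rwa [← angle_eq_iff_inner_eq_cos hy hv hγ, angle_smul_left_of_pos _ _ hx']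
  · rintro ⟨y, hy, hyu, hyv⟩
    exact ⟨y, norm_ne_zero_iff.1 (hy ▸ one_ne_zero), (angle_eq_iff_inner_eq_cos hy hu hβ).2 hyu,
      (angle_eq_iff_inner_eq_cos hy hv hγ).2 hyv⟩

end Cones

/-- Two right circular cones in `ℝ³` with common apex at the origin, unit axes `u1, u2`
making angle `A ∈ (0, π)`, and half-angles `β0, γ0 ∈ [0, π]` have a common ray iff
`cos²β0 + cos²γ0 - sin²A - 2cosβ0·cosγ0·cosA ≤ 0`. -/
theorem stmt_14 (u1 u2 : EuclideanSpace ℝ (Fin 3))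
    (hu1 : ‖u1‖ = 1) (hu2 : ‖u2‖ = 1)
    (A β0 γ0 : ℝ) (hA : A ∈ Set.Ioo 0 Real.pi)
    (hangle : angle u1 u2 = A)
    (hβ0 : β0 ∈ Set.Icc 0 Real.pi) (hγ0 : γ0 ∈ Set.Icc 0 Real.pi) :
    (∃ x : EuclideanSpace ℝ (Fin 3), x ≠ 0 ∧ angle x u1 = β0 ∧ angle x u2 = γ0) ↔
    Real.cos β0 ^ 2 + Real.cos γ0 ^ 2 - Real.sin A ^ 2 -
      2 * Real.cos β0 * Real.cos γ0 * Real.cos A ≤ 0 := by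
  have hcos : ⟪u1, u2⟫ = cos A :=
    (angle_eq_iff_inner_eq_cos hu1 hu2 (Set.Ioo_subset_Icc_self hA)).1 hangle
  have hsin : 0 < sin A := sin_pos_of_pos_of_lt_pi hA.1 hA.2
  have hlt : ⟪u1, u2⟫ ^ 2 < 1 := by rw [hcos, cos_sq']; linarith [pow_pos hsin 2]
  have hdim : 2 < finrank ℝ (EuclideanSpace ℝ (Fin 3)) := by simp
  rw [exists_ne_zero_angle_eq_iff_exists_inner_eq_cos hu1 hu2 hβ0 hγ0,
    exists_norm_eq_one_inner_eq_iff hdim hu1 hu2 hlt, hcos, ← sin_sq]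
  constructor <;> intro h <;> linarith
end
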